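/- arXiv:2012.10200 — 4 statements merged into one kernel-verified Lean document; each statement's English description precedes it below -/
import Mathlib

section
/- Let 0 ≤ γ < 1 and d ∈ ℕ with d ≥ 1, and set λ := γ^(1/d) and δ := 1 - γ. Then 1 - λ ≥ (1-γ)/(d + 1 - γ). -/
/-- For `0 ≤ γ < 1`, `d ≥ 1` and `λ := γ^(1/d)`, one has
`1 - λ ≥ (1-γ)/(d + 1 - γ)`. -/
theorem one_sub_lambda_lower_bound (γ : ℝ) (d : ℕ) (hγ0 : 0 ≤ γ) (hγ1 : γ < 1)
    (hd : 1 ≤ d) :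
    1 - γ ^ ((1 : ℝ) / d) ≥ (1 - γ) / (d + 1 - γ) := by
  have hd0 : (0:ℝ) < d := by exact_mod_cast hd
  have hden : (0:ℝ) < d + 1 - γ := by linarith
  set a : ℝ := d / (d + 1 - γ) with ha
  have ha0 : 0 ≤ a := div_nonneg hd0.le hden.le
  -- key: γ ≤ a^d
  have hkey : γ ≤ a ^ d := by
    have h1 : ((d + 1 - γ) / d) ^ d ≤ Real.exp (1 - γ) := by
      have : (d + 1 - γ) / d = 1 + (1 - γ) / d := by field_simp; ring
      rw [this]
      calc (1 + (1 - γ) / d) ^ d ≤ Real.exp ((1 - γ) / d) ^ d := by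
            apply pow_le_pow_left₀
            · have : 0 ≤ (1 - γ) / d := div_nonneg (by linarith) hd0.le
              linarith
            · have := Real.add_one_le_exp ((1 - γ) / d)
              linarith
        _ = Real.exp (1 - γ) := by
            rw [← Real.exp_nat_mul]
            congr 1
            field_simp
    have h2 : γ * Real.exp (1 - γ) ≤ 1 := by
      have := Real.add_one_le_exp (-(1 - γ))
      have hγle : γ ≤ Real.exp (-(1 - γ)) := by linarith
      calc γ * Real.exp (1 - γ) ≤ Real.exp (-(1 - γ)) * Real.exp (1 - γ) :=
            mul_le_mul_of_nonneg_right hγle (Real.exp_pos _).le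
        _ = 1 := by rw [← Real.exp_add]; simp
    have h3 : γ * ((d + 1 - γ) / d) ^ d ≤ 1 :=
      le_trans (mul_le_mul_of_nonneg_left h1 hγ0) h2
    have hinv : a ^ d = (((d + 1 - γ) / d) ^ d)⁻¹ := by
      rw [ha, ← inv_pow]
      congr 1
      rw [inv_div]
    have hX : 0 < ((d + 1 - γ) / d) ^ d := by positivity
    rw [hinv, ← one_div]
    exact (le_div_iff₀ hX).mpr (by linarith)
  have hle : γ ^ ((1:ℝ) / d) ≤ a := by
    have : γ ^ ((1:ℝ) / d) ≤ (a ^ d) ^ ((1:ℝ) / d) :=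
      Real.rpow_le_rpow hγ0 hkey (by positivity)
    calc γ ^ ((1:ℝ) / d) ≤ (a ^ d) ^ ((1:ℝ) / d) := this
      _ = a := by
        rw [← Real.rpow_natCast a d, ← Real.rpow_mul ha0]
        rw [mul_one_div, div_self hd0.ne', Real.rpow_one]
  have : 1 - a = (1 - γ) / (d + 1 - γ) := by
    rw [ha, one_sub_div hden.ne']
    ring_nf
  linarith
end

section
/- Q̲* max-relationship: for any sequentialized history τ with g⁻¹(τ) ∈ H, max over x ∈ B of Q̲*(τ, x) equals λ^(d-1) times the max over x ∈ B^d of Q̲*(τ ⟨x o r_⊥⟩_{<d}, x_d). -/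
/-- Finite interaction histories: an initial observation-reward pair followed by a
list of (decision, observation, reward) triples. -/
abbrev Hist (O R A : Type) : Type := (O × R) × List (A × O × R)

namespace Seq

variable {O R A B : Type} {m : ℕ}

/-- The most recent observation of a history. -/
def lastObs (h : Hist O R A) : O :=
  match h.2.getLast? with
  | some s => s.2.1
  | none => h.1.1

/-- Extending a history by one interaction step. -/
def ext (h : Hist O R A) (a : A) (o : O) (r : R) : Hist O R A :=
  (h.1, h.2 ++ [(a, o, r)])

/-- Appending a block of steps to a history. -/
def app (τ : Hist O R B) (l : List (B × O × R)) : Hist O R B := (τ.1, τ.2 ++ l)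

/-- `inter x o r⊥ i` is the interleaved block `⟨x o r⊥⟩_{<i}`: the first `i`
decision symbols of the code `x ∈ B^(m+1)`, each followed by the dummy
observation `o` and dummy reward `r⊥`. -/
def inter (x : Fin (m + 1) → B) (o : O) (rbot : R) (i : ℕ) : List (B × O × R) :=
  ((List.ofFn x).take i).map fun b => (b, o, rbot)

/-- The body of the history transformation `g`, keeping track of the current last
observation. Each original step `(a, o', r')` taken at last observation `o` is
replaced by `C(a)₁ o r⊥ … C(a)_{d-1} o r⊥ C(a)_d o' r'` with `d = m + 1`. -/
def gList (C : A → Fin (m + 1) → B) (rbot : R) : O → List (A × O × R) → List (B × O × R)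
  | _, [] => []
  | o, (a, o', r') :: t =>
      (inter (C a) o rbot m ++ [(C a (Fin.last m), o', r')]) ++ gList C rbot o' t

/-- The history transformation function `g : H → H̲` sequentializing each action
into its `B`-ary code. -/
def g (C : A → Fin (m + 1) → B) (rbot : R) (h : Hist O R A) : Hist O R B :=
  (h.1, gList C rbot h.1.1 h.2)

end Seq

section Aux

variable {O R B : Type} {m : ℕ}

lemma inter_congr (x y : Fin (m + 1) → B) (o : O) (r : R) (i : ℕ)
    (h : ∀ j : Fin (m + 1), (j : ℕ) < i → x j = y j) :
    Seq.inter x o r i = Seq.inter y o r i := by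
  unfold Seq.inter
  congr 1
  apply List.ext_getElem
  · simp
  · intro n h1 h2
    simp only [List.getElem_take, List.getElem_ofFn]
    have hn : n < i := by rw [List.length_take, List.length_ofFn] at h1; omega
    exact h _ hn

lemma inter_succ (x : Fin (m + 1) → B) (o : O) (r : R) {i : ℕ} (hi : i < m + 1) :
    Seq.inter x o r (i + 1) = Seq.inter x o r i ++ [(x ⟨i, hi⟩, o, r)] := by
  unfold Seq.inter
  have hkey : (List.ofFn x)[i]? = some (x ⟨i, hi⟩) := by
    rw [List.getElem?_eq_getElem (by simpa using hi), List.getElem_ofFn]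
  rw [List.take_succ, hkey]
  simp only [Option.toList_some, List.map_append, List.map_cons, List.map_nil]

lemma lastObs_app_nil (τ : Hist O R B) : Seq.lastObs (Seq.app τ []) = Seq.lastObs τ := by
  simp [Seq.app, Seq.lastObs]

lemma lastObs_concat (τ : Hist O R B) (l : List (B × O × R)) (s : B × O × R) :
    Seq.lastObs (Seq.app τ (l ++ [s])) = s.2.1 := by
  simp [Seq.app, Seq.lastObs, ← List.append_assoc, List.getLast?_concat]

end Aux

/-- `Q̲*` max-relationship. For the sequentialized environment `P̲`
(deterministically emitting the last observation and zero reward `r⊥` at partial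
histories), the optimal action-values `Q̲*` (the bounded solution of the optimal
Bellman equation with discount `λ`) satisfy, at every complete sequentialized
history `τ` (length a multiple of `d = m+1`):
`max_{x ∈ B} Q̲*(τ,x) = λ^(d-1) max_{x ∈ B^d} Q̲*(τ⟨x o r⊥⟩_{<d}, x_d)`. -/
theorem qbar_max_relationship {O R B : Type} [Fintype O] [Fintype R] [Fintype B] [DecidableEq O] [DecidableEq R]
    [Nonempty B] {m : ℕ} (ρ : R → ℝ) (rbot : R) (hρ : ρ rbot = 0)
    (lam : ℝ) (hlam0 : 0 ≤ lam) (hlam1 : lam < 1)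
    (Pb : Hist O R B → B → (O × R) → ℝ)
    (hPb0 : ∀ τ x y, 0 ≤ Pb τ x y) (hPb1 : ∀ τ x, ∑ y : O × R, Pb τ x y = 1)
    (hPbpartial : ∀ τ : Hist O R B, (τ.2.length + 1) % (m + 1) ≠ 0 → ∀ x o' r',
        Pb τ x (o', r') = if o' = Seq.lastObs τ ∧ r' = rbot then 1 else 0)
    (Qb : Hist O R B → B → ℝ) (hQbbdd : ∃ M, ∀ τ x, |Qb τ x| ≤ M)
    (hQbOBE : ∀ τ x, Qb τ x = ∑ o' : O, ∑ r' : R,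
        Pb τ x (o', r') * (ρ r' + lam * ⨆ x', Qb (Seq.ext τ x o' r') x'))
    (τ : Hist O R B) (hτ : τ.2.length % (m + 1) = 0) :
    (⨆ x, Qb τ x) =
      lam ^ m * ⨆ x : Fin (m + 1) → B,
        Qb (Seq.app τ (Seq.inter x (Seq.lastObs τ) rbot m)) (x (Fin.last m)) := by
  classical
  obtain ⟨M, hM⟩ := hQbbdd
  have hMle : ∀ σ y, Qb σ y ≤ M := fun σ y => (abs_le.mp (hM σ y)).2
  have bdd1 : ∀ σ : Hist O R B, BddAbove (Set.range (Qb σ)) :=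
    fun σ => ⟨M, by rintro r ⟨b, rfl⟩; exact hMle _ _⟩
  set o := Seq.lastObs τ with ho
  -- one-step unrolling at partial histories
  have step : ∀ σ : Hist O R B, (σ.2.length + 1) % (m + 1) ≠ 0 → ∀ b,
      Qb σ b = lam * ⨆ b', Qb (Seq.ext σ b (Seq.lastObs σ) rbot) b' := by
    intro σ hσ b
    rw [hQbOBE]
    have hP : ∀ o' r', Pb σ b (o', r') =
        (if o' = Seq.lastObs σ then (1 : ℝ) else 0) * (if r' = rbot then 1 else 0) := by
      intro o' r'
      rw [hPbpartial σ hσ]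
      by_cases h1 : o' = Seq.lastObs σ <;> by_cases h2 : r' = rbot <;> simp [h1, h2]
    simp only [hP]
    rw [Finset.sum_eq_single (Seq.lastObs σ)]
    · rw [Finset.sum_eq_single rbot]
      · simp [hρ]
      · intro r' _ hr'; simp [hr']
      · simp
    · intro o' _ ho'; simp [ho']
    · simp
  -- last observation of a dummy-extended history
  have hlast : ∀ (x : Fin (m + 1) → B) (i : ℕ),
      Seq.lastObs (Seq.app τ (Seq.inter x o rbot i)) = o := by
    intro x i
    cases i with
    | zero =>
      have : Seq.inter x o rbot 0 = [] := by simp [Seq.inter]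
      rw [this, lastObs_app_nil]
    | succ j =>
      rcases le_or_gt (j + 1) (m + 1) with h | h
      · rw [inter_succ x o rbot (show j < m + 1 by omega), lastObs_concat]
      · have h1 : Seq.inter x o rbot (j + 1) = Seq.inter x o rbot (m + 1) := by
          unfold Seq.inter
          rw [List.take_of_length_le (by simp; omega), List.take_of_length_le (by simp)]
        rw [h1, inter_succ x o rbot (Nat.lt_succ_self m), lastObs_concat]
  -- main induction
  have key : ∀ i (hi : i < m + 1),
      (⨆ b, Qb τ b) = lam ^ i *
        ⨆ x : Fin (m + 1) → B, Qb (Seq.app τ (Seq.inter x o rbot i)) (x ⟨i, hi⟩) := by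
    intro i
    induction i with
    | zero =>
      intro hi
      have h0 : ∀ x : Fin (m + 1) → B, Seq.app τ (Seq.inter x o rbot 0) = τ := by
        intro x; simp [Seq.inter, Seq.app]
      simp only [pow_zero, one_mul, h0]
      apply le_antisymm
      · refine ciSup_le fun b => ?_
        exact le_ciSup (⟨M, by rintro r ⟨y, rfl⟩; exact hMle _ _⟩ :
          BddAbove (Set.range fun x : Fin (m + 1) → B => Qb τ (x ⟨0, hi⟩))) fun _ => b
      · exact ciSup_le fun x => le_ciSup (bdd1 τ) (x ⟨0, hi⟩)
    | succ i IH =>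
      intro hi
      have hi' : i < m + 1 := by omega
      rw [IH hi']
      have hstep : ∀ x : Fin (m + 1) → B,
          Qb (Seq.app τ (Seq.inter x o rbot i)) (x ⟨i, hi'⟩)
            = lam * ⨆ b, Qb (Seq.app τ (Seq.inter x o rbot (i + 1))) b := by
        intro x
        have hlen : ((Seq.app τ (Seq.inter x o rbot i)).2.length + 1) % (m + 1) ≠ 0 := by
          have hL : (Seq.app τ (Seq.inter x o rbot i)).2.length = τ.2.length + i := by
            simp [Seq.app, Seq.inter]
            omega
          rw [hL]
          obtain ⟨k, hk⟩ := Nat.dvd_of_mod_eq_zero hτ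
          rw [hk]
          have : (m + 1) * k + i + 1 = (i + 1) + (m + 1) * k := by ring
          rw [this, Nat.add_mul_mod_self_left, Nat.mod_eq_of_lt (by omega)]
          omega
        have hext : Seq.ext (Seq.app τ (Seq.inter x o rbot i)) (x ⟨i, hi'⟩) o rbot
            = Seq.app τ (Seq.inter x o rbot (i + 1)) := by
          simp [Seq.ext, Seq.app, inter_succ x o rbot hi', List.append_assoc]
        rw [step _ hlen, hlast x i, hext]
      simp only [hstep]
      rw [← Real.mul_iSup_of_nonneg hlam0, pow_succ, mul_assoc]
      congr 1
      congr 1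
      -- sup exchange
      apply le_antisymm
      · refine ciSup_le fun x => ciSup_le fun b => ?_
        set x' : Fin (m + 1) → B := Function.update x ⟨i + 1, hi⟩ b with hx'
        have hint : Seq.inter x' o rbot (i + 1) = Seq.inter x o rbot (i + 1) := by
          refine inter_congr _ _ _ _ _ fun j hj => ?_
          exact Function.update_of_ne (by intro hEq; rw [hEq] at hj; simp at hj) _ _
        have hx'i : x' ⟨i + 1, hi⟩ = b := Function.update_self _ _ _
        have : Qb (Seq.app τ (Seq.inter x o rbot (i + 1))) b
            = Qb (Seq.app τ (Seq.inter x' o rbot (i + 1))) (x' ⟨i + 1, hi⟩) := by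
          rw [hint, hx'i]
        rw [this]
        exact le_ciSup (⟨M, by rintro r ⟨y, rfl⟩; exact hMle _ _⟩ :
          BddAbove (Set.range fun x : Fin (m + 1) → B =>
            Qb (Seq.app τ (Seq.inter x o rbot (i + 1))) (x ⟨i + 1, hi⟩))) x'
      · refine ciSup_le fun x => ?_
        refine le_trans (le_ciSup (bdd1 _) (x ⟨i + 1, hi⟩)) ?_
        exact le_ciSup (⟨M, by rintro r ⟨y, rfl⟩; exact ciSup_le fun b => hMle _ _⟩ :
          BddAbove (Set.range fun x : Fin (m + 1) → B =>
            ⨆ b, Qb (Seq.app τ (Seq.inter x o rbot (i + 1))) b)) x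
  exact key m (Nat.lt_succ_self m)
end

section
/- Fixed-policy Q x-relationship: for any policy Π̲ of the sequentialized environment, any history τ = g(h), and any x ∈ B^d, Q̲^{Π̲}(τ ⟨x o r_⊥⟩_{<d}, x_d) = Q^{Π̄}(h, D(x)), where Π̄ is the induced policy on the original environment. -/
/-- The policy `Π̄` on the original environment induced by a sequentialized policy
`Π̲`: `Π̄(a|h) = ∏_{i=1}^d Π̲(C(a)_i | g(h)⟨C(a) o r⊥⟩_{<i})`. -/
noncomputable def Seq.induced {O R A B : Type} {m : ℕ}
    (Pib : Hist O R B → B → ℝ) (C : A → Fin (m + 1) → B) (rbot : R)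
    (h : Hist O R A) (a : A) : ℝ :=
  ∏ k : Fin (m + 1),
    Pib (Seq.app (Seq.g C rbot h) (Seq.inter (C a) (Seq.lastObs h) rbot k.val)) (C a k)
namespace SeqAux

open Seq

variable {O R A B : Type} {m : ℕ}

/-- last observation tracker via foldl -/
def lob {α : Type} (o : O) (l : List (α × O × R)) : O :=
  l.foldl (fun _ s => s.2.1) o

lemma lob_append {α : Type} (o : O) (l₁ l₂ : List (α × O × R)) :
    lob o (l₁ ++ l₂) = lob (lob o l₁) l₂ := List.foldl_append ..

lemma lob_cons {α : Type} (o : O) (s : α × O × R) (l : List (α × O × R)) :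
    lob o (s :: l) = lob s.2.1 l := rfl

lemma lob_singleton {α : Type} (o : O) (s : α × O × R) : lob o [s] = s.2.1 := rfl

lemma lastObs_eq_lob (h : Hist O R A) : lastObs h = lob h.1.1 h.2 := by
  obtain ⟨⟨o, r⟩, l⟩ := h
  induction l generalizing o r with
  | nil => rfl
  | cons s t ih =>
    have h1 : lastObs ((o, r), s :: t) = lastObs ((s.2.1, s.2.2), t) := by
      cases t with
      | nil => simp [lastObs]
      | cons s' t' =>
        rcases e : (s' :: t').getLast? with _ | z
        · simp at e
        · simp [lastObs, List.getLast?_cons_cons, e]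
    rw [h1, ih s.2.1 s.2.2]
    rfl

lemma length_inter (x : Fin (m + 1) → B) (o : O) (r : R) {i : ℕ} (hi : i ≤ m + 1) :
    (inter x o r i).length = i := by
  simp [inter]
  omega

lemma inter_succ (x : Fin (m + 1) → B) (o : O) (r : R) {i : ℕ} (hi : i < m + 1) :
    inter x o r (i + 1) = inter x o r i ++ [(x ⟨i, hi⟩, o, r)] := by
  unfold inter
  rw [List.take_succ]
  have : (List.ofFn x)[i]? = some (x ⟨i, hi⟩) := by
    rw [List.getElem?_eq_getElem (by simpa using hi), List.getElem_ofFn]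
  rw [this]
  simp

lemma inter_congr {x y : Fin (m + 1) → B} (o : O) (r : R) {i : ℕ}
    (hxy : ∀ k : Fin (m + 1), (k : ℕ) < i → x k = y k) :
    inter x o r i = inter y o r i := by
  unfold inter
  congr 1
  apply List.ext_getElem
  · simp
  · intro n h1 h2
    have hn : n < i := by simp at h1; omega
    simp only [List.getElem_take, List.getElem_ofFn]
    exact hxy _ hn

lemma lob_inter (x : Fin (m + 1) → B) (o : O) (r : R) {i : ℕ} (hi : i ≤ m + 1) :
    lob o (inter x o r i) = o := by
  induction i with
  | zero => rfl
  | succ i ih =>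
    rw [inter_succ x o r (Nat.lt_of_succ_le hi), lob_append, lob_singleton]

lemma length_gList (C : A → Fin (m + 1) → B) (rbot : R) (o : O) (l : List (A × O × R)) :
    (gList C rbot o l).length = (m + 1) * l.length := by
  induction l generalizing o with
  | nil => rfl
  | cons s t ih =>
    obtain ⟨a, o', r'⟩ := s
    simp only [gList, List.length_append, List.length_cons, List.length_nil, ih o',
      length_inter (C a) o rbot (Nat.le_succ m)]
    ring

lemma lob_gList (C : A → Fin (m + 1) → B) (rbot : R) (l : List (A × O × R)) (o : O) :
    lob o (gList C rbot o l) = lob o l := by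
  induction l generalizing o with
  | nil => rfl
  | cons s t ih =>
    obtain ⟨a, o', r'⟩ := s
    show lob o ((inter (C a) o rbot m ++ [(C a (Fin.last m), o', r')]) ++ gList C rbot o' t) = _
    rw [lob_append, lob_append, lob_inter (C a) o rbot (Nat.le_succ m), lob_singleton, ih o', lob_cons]

lemma lastObs_g (C : A → Fin (m + 1) → B) (rbot : R) (h : Hist O R A) :
    lastObs (g C rbot h) = lastObs h := by
  rw [lastObs_eq_lob, lastObs_eq_lob]
  exact lob_gList C rbot h.2 h.1.1

lemma gList_concat (C : A → Fin (m + 1) → B) (rbot : R) (l : List (A × O × R))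
    (o : O) (a : A) (o' : O) (r' : R) :
    gList C rbot o (l ++ [(a, o', r')])
      = gList C rbot o l ++ (inter (C a) (lob o l) rbot m ++ [(C a (Fin.last m), o', r')]) := by
  induction l generalizing o with
  | nil => simp [gList, lob]
  | cons s t ih =>
    obtain ⟨a₁, o₁, r₁⟩ := s
    show (inter (C a₁) o rbot m ++ [(C a₁ (Fin.last m), o₁, r₁)]) ++ gList C rbot o₁ (t ++ [(a, o', r')]) = _
    rw [ih o₁]
    simp [gList, lob_cons]

lemma g_ext (C : A → Fin (m + 1) → B) (rbot : R) (h : Hist O R A) (a : A) (o' : O) (r' : R) :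
    g C rbot (ext h a o' r')
      = app (g C rbot h) (inter (C a) (lastObs h) rbot m ++ [(C a (Fin.last m), o', r')]) := by
  show (h.1, gList C rbot h.1.1 (h.2 ++ [(a, o', r')])) = _
  rw [gList_concat, ← lastObs_eq_lob]
  rfl

end SeqAux
namespace SeqAux

open Seq

variable {O R A B : Type} {m : ℕ}

/-- Partially interleaved sequentialized history. -/
def tau (C : A → Fin (m + 1) → B) (rbot : R) (h : Hist O R A) (i : ℕ)
    (x : Fin (m + 1) → B) : Hist O R B :=
  app (g C rbot h) (inter x (lastObs h) rbot i)

lemma tau_zero (C : A → Fin (m + 1) → B) (rbot : R) (h : Hist O R A)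
    (x : Fin (m + 1) → B) : tau C rbot h 0 x = g C rbot h := by
  simp [tau, app, inter]

lemma tau_congr (C : A → Fin (m + 1) → B) (rbot : R) (h : Hist O R A) {i : ℕ}
    {x y : Fin (m + 1) → B} (hxy : ∀ k : Fin (m + 1), (k : ℕ) < i → x k = y k) :
    tau C rbot h i x = tau C rbot h i y := by
  unfold tau
  rw [inter_congr _ _ hxy]

lemma lastObs_tau (C : A → Fin (m + 1) → B) (rbot : R) (h : Hist O R A) {i : ℕ}
    (hi : i ≤ m + 1) (x : Fin (m + 1) → B) :
    lastObs (tau C rbot h i x) = lastObs h := by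
  rw [lastObs_eq_lob]
  show lob (g C rbot h).1.1 ((g C rbot h).2 ++ inter x (lastObs h) rbot i) = _
  rw [lob_append]
  have h1 : lob (g C rbot h).1.1 (g C rbot h).2 = lastObs h := by
    rw [← lastObs_eq_lob, lastObs_g]
  rw [h1, lob_inter x (lastObs h) rbot hi]

lemma length_tau (C : A → Fin (m + 1) → B) (rbot : R) (h : Hist O R A) {i : ℕ}
    (hi : i ≤ m + 1) (x : Fin (m + 1) → B) :
    (tau C rbot h i x).2.length = (m + 1) * h.2.length + i := by
  show ((g C rbot h).2 ++ inter x (lastObs h) rbot i).length = _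
  rw [List.length_append, length_inter x _ rbot hi]
  show (gList C rbot h.1.1 h.2).length + i = _
  rw [length_gList]

lemma ext_tau (C : A → Fin (m + 1) → B) (rbot : R) (h : Hist O R A) {i : ℕ}
    (hi : i < m + 1) (x : Fin (m + 1) → B) (b : B) :
    ext (tau C rbot h i x) b (lastObs h) rbot
      = tau C rbot h (i + 1) (Function.update x ⟨i, hi⟩ b) := by
  show ((g C rbot h).1, ((g C rbot h).2 ++ inter x (lastObs h) rbot i) ++ [(b, lastObs h, rbot)]) = _
  unfold tau app
  rw [inter_succ _ _ _ hi, List.append_assoc]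
  congr 2
  rw [inter_congr (x := Function.update x ⟨i, hi⟩ b) (y := x) _ _ ?_, Function.update_self]
  intro k hk
  exact Function.update_of_ne (by intro e; rw [e] at hk; simp at hk) _ _

lemma ext_tau_last (C : A → Fin (m + 1) → B) (rbot : R) (h : Hist O R A)
    (a : A) (o' : O) (r' : R) :
    ext (tau C rbot h m (C a)) (C a (Fin.last m)) o' r' = g C rbot (ext h a o' r') := by
  rw [g_ext]
  show ((g C rbot h).1, ((g C rbot h).2 ++ inter (C a) (lastObs h) rbot m) ++ [(C a (Fin.last m), o', r')]) = _
  unfold app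
  rw [List.append_assoc]

/-- Partial product of policy probabilities along the first `i` symbols. -/
noncomputable def pre (Pib : Hist O R B → B → ℝ) (C : A → Fin (m + 1) → B) (rbot : R)
    (h : Hist O R A) (i : ℕ) (x : Fin (m + 1) → B) : ℝ :=
  ∏ k : Fin (m + 1), if (k : ℕ) < i then Pib (tau C rbot h k x) (x k) else 1

lemma pre_zero (Pib : Hist O R B → B → ℝ) (C : A → Fin (m + 1) → B) (rbot : R)
    (h : Hist O R A) (x : Fin (m + 1) → B) : pre Pib C rbot h 0 x = 1 := by
  simp [pre]

lemma pre_succ (Pib : Hist O R B → B → ℝ) (C : A → Fin (m + 1) → B) (rbot : R)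
    (h : Hist O R A) {i : ℕ} (hi : i < m + 1) (x : Fin (m + 1) → B) :
    pre Pib C rbot h (i + 1) x
      = pre Pib C rbot h i x * Pib (tau C rbot h i x) (x ⟨i, hi⟩) := by
  unfold pre
  have key : ∀ k : Fin (m + 1),
      (if (k : ℕ) < i + 1 then Pib (tau C rbot h k x) (x k) else 1)
        = (if (k : ℕ) < i then Pib (tau C rbot h k x) (x k) else 1)
          * (if k = ⟨i, hi⟩ then Pib (tau C rbot h k x) (x k) else 1) := by
    intro k
    rcases lt_trichotomy (k : ℕ) i with hk | hk | hk
    · rw [if_pos (by omega), if_pos hk, if_neg (by intro e; rw [e] at hk; simp at hk), mul_one]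
    · have : k = ⟨i, hi⟩ := by apply Fin.ext; exact hk
      rw [if_pos (by omega), if_neg (by omega), if_pos this, one_mul]
    · rw [if_neg (by omega), if_neg (by omega), if_neg (by intro e; rw [e] at hk; simp at hk), mul_one]
  rw [Finset.prod_congr rfl (fun k _ => key k), Finset.prod_mul_distrib]
  congr 1
  simp

lemma pre_congr (Pib : Hist O R B → B → ℝ) (C : A → Fin (m + 1) → B) (rbot : R)
    (h : Hist O R A) {i : ℕ} {x : Fin (m + 1) → B} (j : Fin (m + 1)) (b : B)
    (hij : i ≤ (j : ℕ)) :
    pre Pib C rbot h i (Function.update x j b) = pre Pib C rbot h i x := by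
  unfold pre
  apply Finset.prod_congr rfl
  intro k _
  by_cases hk : (k : ℕ) < i
  · rw [if_pos hk, if_pos hk]
    have hkj : k ≠ j := by intro e; rw [e] at hk; omega
    rw [Function.update_of_ne hkj]
    congr 1
    apply tau_congr
    intro k' hk'
    exact Function.update_of_ne (by intro e; rw [e] at hk'; omega) _ _
  · rw [if_neg hk, if_neg hk]

lemma pre_full (Pib : Hist O R B → B → ℝ) (C : A → Fin (m + 1) → B) (rbot : R)
    (h : Hist O R A) (x : Fin (m + 1) → B) :
    pre Pib C rbot h (m + 1) x = ∏ k : Fin (m + 1), Pib (tau C rbot h k x) (x k) := by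
  unfold pre
  apply Finset.prod_congr rfl
  intro k _
  rw [if_pos k.isLt]

lemma induced_eq_pre (Pib : Hist O R B → B → ℝ) (C : A → Fin (m + 1) → B) (rbot : R)
    (h : Hist O R A) (a : A) :
    Seq.induced Pib C rbot h a = pre Pib C rbot h (m + 1) (C a) := by
  rw [pre_full]
  rfl

lemma sum_update {n : ℕ} {β : Type} [Fintype β] (f : (Fin n → β) → ℝ) (i : Fin n) :
    ∑ x : Fin n → β, ∑ b : β, f (Function.update x i b)
      = (Fintype.card β : ℝ) * ∑ y : Fin n → β, f y := by
  have einv : Function.Involutive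
      (fun p : (Fin n → β) × β => (Function.update p.1 i p.2, p.1 i)) := by
    intro p
    simp [Function.update_idem, Function.update_eq_self]
  have := Equiv.sum_comp einv.toPerm (fun p : (Fin n → β) × β => f p.1)
  simp only [Function.Involutive.coe_toPerm] at this
  calc ∑ x : Fin n → β, ∑ b : β, f (Function.update x i b)
      = ∑ p : (Fin n → β) × β, f (Function.update p.1 i p.2) := by
        rw [Fintype.sum_prod_type]
    _ = ∑ p : (Fin n → β) × β, f p.1 := this
    _ = ∑ x : Fin n → β, ∑ _b : β, f x := by rw [Fintype.sum_prod_type]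
    _ = (Fintype.card β : ℝ) * ∑ y : Fin n → β, f y := by
        simp [Finset.sum_const, Finset.mul_sum, mul_comm]

end SeqAux
namespace SeqAux

open Seq

variable {O R A B : Type} {m : ℕ}

lemma collapse [Fintype O] [Fintype R] [DecidableEq O] [DecidableEq R]
    (o : O) (rbot : R) (f : O → R → ℝ) :
    (∑ o' : O, ∑ r' : R, (if o' = o ∧ r' = rbot then (1:ℝ) else 0) * f o' r')
      = f o rbot := by
  rw [Finset.sum_eq_single o]
  · rw [Finset.sum_eq_single rbot]
    · simp
    · intro r' _ hr; simp [hr]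
    · intro hmem; exact absurd (Finset.mem_univ rbot) hmem
  · intro o' _ ho; simp [ho]
  · intro hmem; exact absurd (Finset.mem_univ o) hmem

lemma claimA [Fintype O] [Fintype R] [Fintype B] [Nonempty B] [DecidableEq O] [DecidableEq R]
    (ρ : R → ℝ) (rbot : R) (hρ : ρ rbot = 0) (lam : ℝ)
    (C : A → Fin (m + 1) → B)
    (Pb : Hist O R B → B → (O × R) → ℝ)
    (hPbpartial : ∀ τ : Hist O R B, (τ.2.length + 1) % (m + 1) ≠ 0 → ∀ x o' r',
        Pb τ x (o', r') = if o' = Seq.lastObs τ ∧ r' = rbot then 1 else 0)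
    (Pib : Hist O R B → B → ℝ)
    (Vb : Hist O R B → ℝ)
    (hVb : ∀ τ, Vb τ = ∑ x : B, Pib τ x * ∑ o' : O, ∑ r' : R,
        Pb τ x (o', r') * (ρ r' + lam * Vb (Seq.ext τ x o' r')))
    (h : Hist O R A) :
    ∀ i : ℕ, i ≤ m →
      (Fintype.card B : ℝ) ^ (m + 1 - i) * Vb (Seq.g C rbot h)
        = lam ^ i * ∑ x : Fin (m + 1) → B,
            pre Pib C rbot h i x * Vb (tau C rbot h i x) := by
  intro i
  induction i with
  | zero =>
    intro _
    simp only [pre_zero, tau_zero, one_mul, pow_zero, Nat.sub_zero]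
    rw [Finset.sum_const, nsmul_eq_mul, Finset.card_univ]
    congr 1
    rw [Fintype.card_fun]
    push_cast
    simp
  | succ i ih =>
    intro hi1
    have hi : i ≤ m := Nat.le_of_succ_le hi1
    have hilt : i < m + 1 := by omega
    have hBne : (Fintype.card B : ℝ) ≠ 0 := by
      have : 0 < Fintype.card B := Fintype.card_pos
      positivity
    have step : ∀ x : Fin (m + 1) → B,
        Vb (tau C rbot h i x)
          = lam * ∑ b : B, Pib (tau C rbot h i x) b *
              Vb (tau C rbot h (i + 1) (Function.update x ⟨i, hilt⟩ b)) := by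
      intro x
      rw [hVb (tau C rbot h i x)]
      have hlen : ((tau C rbot h i x).2.length + 1) % (m + 1) ≠ 0 := by
        rw [length_tau C rbot h (by omega) x]
        have he : (m + 1) * h.2.length + i + 1 = (i + 1) + (m + 1) * h.2.length := by ring
        rw [he, Nat.add_mul_mod_self_left, Nat.mod_eq_of_lt (by omega)]
        omega
      rw [Finset.mul_sum]
      apply Finset.sum_congr rfl
      intro b _
      have hinner : (∑ o' : O, ∑ r' : R, Pb (tau C rbot h i x) b (o', r')
            * (ρ r' + lam * Vb (Seq.ext (tau C rbot h i x) b o' r')))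
          = ρ rbot + lam * Vb (Seq.ext (tau C rbot h i x) b (Seq.lastObs h) rbot) := by
        have hPbs : ∀ (o' : O) (r' : R), Pb (tau C rbot h i x) b (o', r')
            = if o' = Seq.lastObs h ∧ r' = rbot then 1 else 0 := by
          intro o' r'
          rw [hPbpartial _ hlen b o' r', lastObs_tau C rbot h (by omega) x]
        rw [Finset.sum_congr rfl fun o' _ => Finset.sum_congr rfl fun r' _ => by
          rw [hPbs o' r']]
        exact collapse (Seq.lastObs h) rbot _
      rw [hinner, hρ, ext_tau C rbot h hilt x b]
      ring
    have hx : ∀ x : Fin (m + 1) → B,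
        pre Pib C rbot h i x * Vb (tau C rbot h i x)
          = lam * ∑ b : B, pre Pib C rbot h (i + 1) (Function.update x ⟨i, hilt⟩ b)
              * Vb (tau C rbot h (i + 1) (Function.update x ⟨i, hilt⟩ b)) := by
      intro x
      rw [step x, Finset.mul_sum, Finset.mul_sum, Finset.mul_sum]
      apply Finset.sum_congr rfl
      intro b _
      have hpre : pre Pib C rbot h (i + 1) (Function.update x ⟨i, hilt⟩ b)
          = pre Pib C rbot h i x * Pib (tau C rbot h i x) b := by
        rw [pre_succ Pib C rbot h hilt,
          pre_congr Pib C rbot h ⟨i, hilt⟩ b (le_refl i), Function.update_self]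
        congr 2
        apply tau_congr
        intro k hk
        exact Function.update_of_ne (by intro e; rw [e] at hk; simp at hk) _ _
      rw [hpre]
      ring
    have E1 : (Fintype.card B : ℝ) ^ (m + 1 - i) * Vb (Seq.g C rbot h)
        = lam ^ (i + 1) * ((Fintype.card B : ℝ) * ∑ y : Fin (m + 1) → B,
            pre Pib C rbot h (i + 1) y * Vb (tau C rbot h (i + 1) y)) := by
      rw [ih hi, Finset.sum_congr rfl fun x _ => hx x,
        ← sum_update (fun y => pre Pib C rbot h (i + 1) y * Vb (tau C rbot h (i + 1) y))
          ⟨i, hilt⟩, ← Finset.mul_sum]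
      ring
    apply mul_left_cancel₀ hBne
    calc (Fintype.card B : ℝ) * ((Fintype.card B : ℝ) ^ (m + 1 - (i + 1)) * Vb (Seq.g C rbot h))
        = (Fintype.card B : ℝ) ^ (m + 1 - i) * Vb (Seq.g C rbot h) := by
          rw [show m + 1 - i = (m + 1 - (i + 1)) + 1 by omega, pow_succ]
          ring
      _ = _ := by rw [E1]; ring

end SeqAux
namespace SeqAux

open Seq

variable {O R A B : Type} {m : ℕ}

lemma claimB [Fintype A] [Fintype O] [Fintype R] [Fintype B] [Nonempty B] [DecidableEq O] [DecidableEq R]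
    (ρ : R → ℝ) (rbot : R) (hρ : ρ rbot = 0) (lam : ℝ)
    (C : A → Fin (m + 1) → B) (D : (Fin (m + 1) → B) → A)
    (hDC : ∀ a, D (C a) = a) (hCD : ∀ x, C (D x) = x)
    (P : Hist O R A → A → (O × R) → ℝ)
    (Pb : Hist O R B → B → (O × R) → ℝ)
    (hPbpartial : ∀ τ : Hist O R B, (τ.2.length + 1) % (m + 1) ≠ 0 → ∀ x o' r',
        Pb τ x (o', r') = if o' = Seq.lastObs τ ∧ r' = rbot then 1 else 0)
    (hPbcomplete : ∀ (h : Hist O R A) (a : A) (o' : O) (r' : R),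
        Pb (Seq.app (Seq.g C rbot h) (Seq.inter (C a) (Seq.lastObs h) rbot m))
            (C a (Fin.last m)) (o', r')
          = P h a (o', r'))
    (Pib : Hist O R B → B → ℝ)
    (Vb : Hist O R B → ℝ)
    (hVb : ∀ τ, Vb τ = ∑ x : B, Pib τ x * ∑ o' : O, ∑ r' : R,
        Pb τ x (o', r') * (ρ r' + lam * Vb (Seq.ext τ x o' r')))
    (h : Hist O R A) :
    Vb (Seq.g C rbot h) = lam ^ m * ∑ a : A, Seq.induced Pib C rbot h a *
      ∑ o' : O, ∑ r' : R, P h a (o', r')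
        * (ρ r' + lam * Vb (Seq.g C rbot (Seq.ext h a o' r'))) := by
  have hBne : (Fintype.card B : ℝ) ≠ 0 := by
    have : 0 < Fintype.card B := Fintype.card_pos
    positivity
  have hmlt : m < m + 1 := Nat.lt_succ_self m
  have hlast : (⟨m, hmlt⟩ : Fin (m + 1)) = Fin.last m := rfl
  set G : A → ℝ := fun a => ∑ o' : O, ∑ r' : R, P h a (o', r')
    * (ρ r' + lam * Vb (Seq.g C rbot (Seq.ext h a o' r'))) with hG
  have hA := claimA ρ rbot hρ lam C Pb hPbpartial Pib Vb hVb h m (le_refl m)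
  rw [show m + 1 - m = 1 by omega, pow_one] at hA
  have hupd : ∀ (x : Fin (m + 1) → B) (b : B),
      tau C rbot h m (C (D (Function.update x (Fin.last m) b))) = tau C rbot h m x := by
    intro x b
    rw [hCD]
    apply tau_congr
    intro k hk
    exact Function.update_of_ne (by intro e; rw [e] at hk; simp at hk) _ _
  have stepm : ∀ x : Fin (m + 1) → B,
      Vb (tau C rbot h m x)
        = ∑ b : B, Pib (tau C rbot h m x) b * G (D (Function.update x (Fin.last m) b)) := by
    intro x
    rw [hVb (tau C rbot h m x)]
    apply Finset.sum_congr rfl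
    intro b _
    congr 1
    set a : A := D (Function.update x (Fin.last m) b) with ha
    have hca : C a = Function.update x (Fin.last m) b := hCD _
    have hca_last : C a (Fin.last m) = b := by rw [hca, Function.update_self]
    have hPbc : ∀ (o' : O) (r' : R),
        Pb (tau C rbot h m x) b (o', r') = P h a (o', r') := by
      intro o' r'
      have := hPbcomplete h a o' r'
      rw [hca_last] at this
      rw [← this]
      congr 1
      rw [← hupd x b]
      rfl
    have hext : ∀ (o' : O) (r' : R),
        Seq.ext (tau C rbot h m x) b o' r' = Seq.g C rbot (Seq.ext h a o' r') := by
      intro o' r'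
      rw [← ext_tau_last C rbot h a o' r', hca_last, hupd x b]
    rw [hG]
    apply Finset.sum_congr rfl
    intro o' _
    apply Finset.sum_congr rfl
    intro r' _
    rw [hPbc o' r', hext o' r']
  have hx : ∀ x : Fin (m + 1) → B,
      pre Pib C rbot h m x * Vb (tau C rbot h m x)
        = ∑ b : B, pre Pib C rbot h (m + 1) (Function.update x (Fin.last m) b)
            * G (D (Function.update x (Fin.last m) b)) := by
    intro x
    rw [stepm x, Finset.mul_sum]
    apply Finset.sum_congr rfl
    intro b _
    have hpre : pre Pib C rbot h (m + 1) (Function.update x (Fin.last m) b)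
        = pre Pib C rbot h m x * Pib (tau C rbot h m x) b := by
      rw [pre_succ Pib C rbot h hmlt, hlast,
        pre_congr Pib C rbot h (Fin.last m) b (by simp), Function.update_self]
      congr 2
      apply tau_congr
      intro k hk
      exact Function.update_of_ne (by intro e; rw [e] at hk; simp at hk) _ _
    rw [hpre]
    ring
  have hsum : ∑ x : Fin (m + 1) → B, pre Pib C rbot h m x * Vb (tau C rbot h m x)
      = (Fintype.card B : ℝ) * ∑ y : Fin (m + 1) → B,
          pre Pib C rbot h (m + 1) y * G (D y) := by
    rw [Finset.sum_congr rfl fun x _ => hx x]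
    exact sum_update (fun y => pre Pib C rbot h (m + 1) y * G (D y)) (Fin.last m)
  rw [hsum] at hA
  have hVg : Vb (Seq.g C rbot h)
      = lam ^ m * ∑ y : Fin (m + 1) → B, pre Pib C rbot h (m + 1) y * G (D y) := by
    apply mul_left_cancel₀ hBne
    rw [hA]; ring
  rw [hVg]
  congr 1
  rw [← Equiv.sum_comp (⟨C, D, hDC, hCD⟩ : A ≃ (Fin (m + 1) → B))
    (fun y => pre Pib C rbot h (m + 1) y * G (D y))]
  apply Finset.sum_congr rfl
  intro a _
  simp only [Equiv.coe_fn_mk]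
  rw [hDC, induced_eq_pre]

lemma sum_pre [Fintype O] [Fintype R] [Fintype B] [Nonempty B] [DecidableEq O] [DecidableEq R]
    (rbot : R) (C : A → Fin (m + 1) → B)
    (Pib : Hist O R B → B → ℝ) (hPib1 : ∀ τ, ∑ x : B, Pib τ x = 1)
    (h : Hist O R A) :
    ∀ i : ℕ, i ≤ m + 1 →
      ∑ x : Fin (m + 1) → B, pre Pib C rbot h i x = (Fintype.card B : ℝ) ^ (m + 1 - i) := by
  have hBne : (Fintype.card B : ℝ) ≠ 0 := by
    have : 0 < Fintype.card B := Fintype.card_pos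
    positivity
  intro i
  induction i with
  | zero =>
    intro _
    simp only [pre_zero, Nat.sub_zero]
    rw [Finset.sum_const, nsmul_eq_mul, Finset.card_univ, mul_one, Fintype.card_fun]
    push_cast
    simp
  | succ i ih =>
    intro hi1
    have hilt : i < m + 1 := by omega
    have h1 : (Fintype.card B : ℝ) * ∑ x : Fin (m + 1) → B, pre Pib C rbot h (i + 1) x
        = ∑ x : Fin (m + 1) → B, ∑ b : B, pre Pib C rbot h (i + 1) (Function.update x ⟨i, hilt⟩ b) :=
      (sum_update (pre Pib C rbot h (i + 1)) ⟨i, hilt⟩).symm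
    have h2 : ∀ (x : Fin (m + 1) → B) (b : B),
        pre Pib C rbot h (i + 1) (Function.update x ⟨i, hilt⟩ b)
          = pre Pib C rbot h i x * Pib (tau C rbot h i x) b := by
      intro x b
      rw [pre_succ Pib C rbot h hilt,
        pre_congr Pib C rbot h ⟨i, hilt⟩ b (le_refl i), Function.update_self]
      congr 2
      apply tau_congr
      intro k hk
      exact Function.update_of_ne (by intro e; rw [e] at hk; simp at hk) _ _
    have h3 : (Fintype.card B : ℝ) * ∑ x : Fin (m + 1) → B, pre Pib C rbot h (i + 1) x
        = (Fintype.card B : ℝ) ^ (m + 1 - i) := by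
      rw [h1, Finset.sum_congr rfl fun x _ => Finset.sum_congr rfl fun b _ => h2 x b]
      have : ∀ x : Fin (m + 1) → B,
          ∑ b : B, pre Pib C rbot h i x * Pib (tau C rbot h i x) b
            = pre Pib C rbot h i x := by
        intro x
        rw [← Finset.mul_sum, hPib1, mul_one]
      rw [Finset.sum_congr rfl fun x _ => this x, ih (by omega)]
    apply mul_left_cancel₀ hBne
    rw [h3, show m + 1 - i = (m + 1 - (i + 1)) + 1 by omega, pow_succ]
    ring

lemma sum_induced [Fintype A] [Fintype O] [Fintype R] [Fintype B] [Nonempty B] [DecidableEq O] [DecidableEq R]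
    (rbot : R) (C : A → Fin (m + 1) → B) (D : (Fin (m + 1) → B) → A)
    (hDC : ∀ a, D (C a) = a) (hCD : ∀ x, C (D x) = x)
    (Pib : Hist O R B → B → ℝ) (hPib1 : ∀ τ, ∑ x : B, Pib τ x = 1)
    (h : Hist O R A) :
    ∑ a : A, Seq.induced Pib C rbot h a = 1 := by
  have h1 : ∑ a : A, Seq.induced Pib C rbot h a
      = ∑ y : Fin (m + 1) → B, pre Pib C rbot h (m + 1) y := by
    rw [← Equiv.sum_comp (⟨C, D, hDC, hCD⟩ : A ≃ (Fin (m + 1) → B))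
      (fun y => pre Pib C rbot h (m + 1) y)]
    apply Finset.sum_congr rfl
    intro a _
    simp only [Equiv.coe_fn_mk]
    exact induced_eq_pre Pib C rbot h a
  rw [h1, sum_pre rbot C Pib hPib1 h (m + 1) (le_refl _)]
  simp

lemma induced_nonneg
    (Pib : Hist O R B → B → ℝ) (hPib0 : ∀ τ x, 0 ≤ Pib τ x)
    (C : A → Fin (m + 1) → B) (rbot : R) (h : Hist O R A) (a : A) :
    0 ≤ Seq.induced Pib C rbot h a :=
  Finset.prod_nonneg fun _ _ => hPib0 _ _

end SeqAux
/-- Fixed-policy `Q` x-relationship. For a sequentialized policy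
`Π̲` with (bounded) value `V̲^Π̲` and action-value `Q̲^Π̲` in `P̲` (discount `λ`),
and induced policy `Π̄` with (bounded) value `V^Π̄` and action-value `Q^Π̄` in `P`
(discount `γ = λ^d`, `ρ r⊥ = 0`), one has, for any `h` with `τ = g(h)` and any
`x ∈ B^d`: `Q̲^Π̲(τ⟨x o r⊥⟩_{<d}, x_d) = Q^Π̄(h, D(x))`. -/
theorem fixed_policy_q_relationship {O R A B : Type} [Fintype O] [Fintype R]
    [Fintype A] [Fintype B] [DecidableEq O] [DecidableEq R] [Nonempty A] [Nonempty B]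
    {m : ℕ}
    (ρ : R → ℝ) (rbot : R) (hρ : ρ rbot = 0)
    (γ lam : ℝ) (hγ0 : 0 ≤ γ) (hγ1 : γ < 1) (hlam0 : 0 ≤ lam)
    (hlamd : lam ^ (m + 1) = γ)
    (C : A → Fin (m + 1) → B) (D : (Fin (m + 1) → B) → A)
    (hDC : ∀ a, D (C a) = a) (hCD : ∀ x, C (D x) = x)
    (P : Hist O R A → A → (O × R) → ℝ)
    (hP0 : ∀ h a y, 0 ≤ P h a y) (hP1 : ∀ h a, ∑ y : O × R, P h a y = 1)
    (Pb : Hist O R B → B → (O × R) → ℝ)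
    (hPb0 : ∀ τ x y, 0 ≤ Pb τ x y) (hPb1 : ∀ τ x, ∑ y : O × R, Pb τ x y = 1)
    (hPbpartial : ∀ τ : Hist O R B, (τ.2.length + 1) % (m + 1) ≠ 0 → ∀ x o' r',
        Pb τ x (o', r') = if o' = Seq.lastObs τ ∧ r' = rbot then 1 else 0)
    (hPbcomplete : ∀ (h : Hist O R A) (a : A) (o' : O) (r' : R),
        Pb (Seq.app (Seq.g C rbot h) (Seq.inter (C a) (Seq.lastObs h) rbot m))
            (C a (Fin.last m)) (o', r')
          = P h a (o', r'))
    (Pib : Hist O R B → B → ℝ)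
    (hPib0 : ∀ τ x, 0 ≤ Pib τ x) (hPib1 : ∀ τ, ∑ x : B, Pib τ x = 1)
    (Vb : Hist O R B → ℝ) (hVbbdd : ∃ M, ∀ τ, |Vb τ| ≤ M)
    (hVb : ∀ τ, Vb τ = ∑ x : B, Pib τ x * ∑ o' : O, ∑ r' : R,
        Pb τ x (o', r') * (ρ r' + lam * Vb (Seq.ext τ x o' r')))
    (V : Hist O R A → ℝ) (hVbdd : ∃ M, ∀ h, |V h| ≤ M)
    (hV : ∀ h, V h = ∑ a : A, Seq.induced Pib C rbot h a * ∑ o' : O, ∑ r' : R,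
        P h a (o', r') * (ρ r' + γ * V (Seq.ext h a o' r')))
    (Qb : Hist O R B → B → ℝ)
    (hQb : ∀ τ x, Qb τ x = ∑ o' : O, ∑ r' : R,
        Pb τ x (o', r') * (ρ r' + lam * Vb (Seq.ext τ x o' r')))
    (Q : Hist O R A → A → ℝ)
    (hQ : ∀ h a, Q h a = ∑ o' : O, ∑ r' : R,
        P h a (o', r') * (ρ r' + γ * V (Seq.ext h a o' r'))) :
    ∀ (h : Hist O R A) (x : Fin (m + 1) → B),
      Qb (Seq.app (Seq.g C rbot h) (Seq.inter x (Seq.lastObs h) rbot m))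
          (x (Fin.last m))
        = Q h (D x) := by
  intro h0 x
  haveI hne : Nonempty (Hist O R A) := ⟨h0⟩
  have key := fun h : Hist O R A =>
    SeqAux.claimB ρ rbot hρ lam C D hDC hCD P Pb hPbpartial hPbcomplete Pib Vb hVb h
  have hnorm := fun h : Hist O R A => SeqAux.sum_induced rbot C D hDC hCD Pib hPib1 h
  have hindnn := fun (h : Hist O R A) (a : A) =>
    SeqAux.induced_nonneg Pib hPib0 C rbot h a
  -- the Bellman-type recursion for the defect Δ h = Vb (g h) - lam^m * V h
  have hrec : ∀ h : Hist O R A,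
      Vb (Seq.g C rbot h) - lam ^ m * V h
        = lam ^ (m + 1) * ∑ a : A, Seq.induced Pib C rbot h a *
            ∑ o' : O, ∑ r' : R, P h a (o', r') *
              (Vb (Seq.g C rbot (Seq.ext h a o' r')) - lam ^ m * V (Seq.ext h a o' r')) := by
    intro h
    have hXY : ∀ a : A,
        (∑ o' : O, ∑ r' : R, P h a (o', r')
            * (ρ r' + lam * Vb (Seq.g C rbot (Seq.ext h a o' r'))))
          - (∑ o' : O, ∑ r' : R, P h a (o', r') * (ρ r' + γ * V (Seq.ext h a o' r')))
          = lam * ∑ o' : O, ∑ r' : R, P h a (o', r') *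
              (Vb (Seq.g C rbot (Seq.ext h a o' r')) - lam ^ m * V (Seq.ext h a o' r')) := by
      intro a
      rw [Finset.mul_sum, ← Finset.sum_sub_distrib]
      apply Finset.sum_congr rfl
      intro o' _
      rw [Finset.mul_sum, ← Finset.sum_sub_distrib]
      apply Finset.sum_congr rfl
      intro r' _
      rw [← hlamd]
      ring
    rw [key h, hV h, ← mul_sub, ← Finset.sum_sub_distrib,
      Finset.sum_congr rfl fun a _ => by rw [← mul_sub, hXY a]]
    rw [pow_succ, Finset.mul_sum, Finset.mul_sum]
    apply Finset.sum_congr rfl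
    intro a _
    ring
  obtain ⟨M1, hM1⟩ := hVbbdd
  obtain ⟨M2, hM2⟩ := hVbdd
  have hlamm : (0:ℝ) ≤ lam ^ m := pow_nonneg hlam0 m
  have hbdd : ∀ h : Hist O R A,
      |Vb (Seq.g C rbot h) - lam ^ m * V h| ≤ M1 + lam ^ m * M2 := by
    intro h
    rw [sub_eq_add_neg]
    refine (abs_add_le _ _).trans ?_
    rw [abs_neg, abs_mul, abs_pow, abs_of_nonneg hlam0]
    have h1 : |Vb (Seq.g C rbot h)| ≤ M1 := hM1 _
    have h2 : |V h| ≤ M2 := hM2 _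
    nlinarith [abs_nonneg (V h)]
  set K := sSup (Set.range fun h : Hist O R A => |Vb (Seq.g C rbot h) - lam ^ m * V h|)
    with hKdef
  have hbddA : BddAbove (Set.range fun h : Hist O R A =>
      |Vb (Seq.g C rbot h) - lam ^ m * V h|) := by
    refine ⟨M1 + lam ^ m * M2, ?_⟩
    rintro _ ⟨h, rfl⟩
    exact hbdd h
  have hKle : ∀ h : Hist O R A, |Vb (Seq.g C rbot h) - lam ^ m * V h| ≤ K :=
    fun h => le_csSup hbddA ⟨h, rfl⟩
  have hK0 : 0 ≤ K := le_trans (abs_nonneg _) (hKle h0)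
  have hstep : ∀ h : Hist O R A, |Vb (Seq.g C rbot h) - lam ^ m * V h| ≤ γ * K := by
    intro h
    rw [hrec h, abs_mul, abs_pow, abs_of_nonneg hlam0, hlamd]
    have hT : ∀ a : A,
        |∑ o' : O, ∑ r' : R, P h a (o', r') *
            (Vb (Seq.g C rbot (Seq.ext h a o' r')) - lam ^ m * V (Seq.ext h a o' r'))| ≤ K := by
      intro a
      have hP1' : ∑ o' : O, ∑ r' : R, P h a (o', r') = 1 := by
        have := hP1 h a
        rwa [Fintype.sum_prod_type] at this
      calc |∑ o' : O, ∑ r' : R, P h a (o', r') *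
              (Vb (Seq.g C rbot (Seq.ext h a o' r')) - lam ^ m * V (Seq.ext h a o' r'))|
          ≤ ∑ o' : O, |∑ r' : R, P h a (o', r') *
              (Vb (Seq.g C rbot (Seq.ext h a o' r')) - lam ^ m * V (Seq.ext h a o' r'))| :=
            Finset.abs_sum_le_sum_abs _ _
        _ ≤ ∑ o' : O, ∑ r' : R, |P h a (o', r') *
              (Vb (Seq.g C rbot (Seq.ext h a o' r')) - lam ^ m * V (Seq.ext h a o' r'))| :=
            Finset.sum_le_sum fun o' _ => Finset.abs_sum_le_sum_abs _ _
        _ ≤ ∑ o' : O, ∑ r' : R, P h a (o', r') * K := by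
            refine Finset.sum_le_sum fun o' _ => Finset.sum_le_sum fun r' _ => ?_
            rw [abs_mul, abs_of_nonneg (hP0 h a (o', r'))]
            exact mul_le_mul_of_nonneg_left (hKle _) (hP0 h a (o', r'))
        _ = (∑ o' : O, ∑ r' : R, P h a (o', r')) * K := by
            rw [Finset.sum_mul]
            exact Finset.sum_congr rfl fun o' _ => (Finset.sum_mul _ _ _).symm
        _ = K := by rw [hP1', one_mul]
    have hS : |∑ a : A, Seq.induced Pib C rbot h a *
        ∑ o' : O, ∑ r' : R, P h a (o', r') *
          (Vb (Seq.g C rbot (Seq.ext h a o' r')) - lam ^ m * V (Seq.ext h a o' r'))| ≤ K := by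
      calc |∑ a : A, Seq.induced Pib C rbot h a *
              ∑ o' : O, ∑ r' : R, P h a (o', r') *
                (Vb (Seq.g C rbot (Seq.ext h a o' r')) - lam ^ m * V (Seq.ext h a o' r'))|
          ≤ ∑ a : A, |Seq.induced Pib C rbot h a *
              ∑ o' : O, ∑ r' : R, P h a (o', r') *
                (Vb (Seq.g C rbot (Seq.ext h a o' r')) - lam ^ m * V (Seq.ext h a o' r'))| :=
            Finset.abs_sum_le_sum_abs _ _
        _ ≤ ∑ a : A, Seq.induced Pib C rbot h a * K := by
            refine Finset.sum_le_sum fun a _ => ?_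
            rw [abs_mul, abs_of_nonneg (hindnn h a)]
            exact mul_le_mul_of_nonneg_left (hT a) (hindnn h a)
        _ = (∑ a : A, Seq.induced Pib C rbot h a) * K := (Finset.sum_mul _ _ _).symm
        _ = K := by rw [hnorm h, one_mul]
    exact mul_le_mul_of_nonneg_left hS hγ0
  have hKγ : K ≤ γ * K := by
    apply csSup_le (Set.range_nonempty _)
    rintro _ ⟨h, rfl⟩
    exact hstep h
  have hKzero : K = 0 := by nlinarith
  have hresc : ∀ h : Hist O R A, Vb (Seq.g C rbot h) = lam ^ m * V h := by
    intro h
    have h1 := hKle h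
    rw [hKzero] at h1
    have h2 := abs_nonneg (Vb (Seq.g C rbot h) - lam ^ m * V h)
    have : |Vb (Seq.g C rbot h) - lam ^ m * V h| = 0 := le_antisymm h1 h2
    have := abs_eq_zero.mp this
    linarith
  -- final computation
  rw [hQb, hQ]
  apply Finset.sum_congr rfl
  intro o' _
  apply Finset.sum_congr rfl
  intro r' _
  have hPbx : Pb (Seq.app (Seq.g C rbot h0) (Seq.inter x (Seq.lastObs h0) rbot m))
      (x (Fin.last m)) (o', r') = P h0 (D x) (o', r') := by
    have := hPbcomplete h0 (D x) o' r'
    rwa [hCD] at this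
  have hextx : Seq.ext (Seq.app (Seq.g C rbot h0) (Seq.inter x (Seq.lastObs h0) rbot m))
      (x (Fin.last m)) o' r' = Seq.g C rbot (Seq.ext h0 (D x) o' r') := by
    have := SeqAux.ext_tau_last C rbot h0 (D x) o' r'
    rwa [hCD] at this
  rw [hPbx, hextx, hresc (Seq.ext h0 (D x) o' r'), ← hlamd]
  ring
end

section
/- Binary ESA bound (asymptotic form): if the original action space has |A| = 2^d elements and γ is close to 1, then the number of states of the binary-sequentialized ESA surrogate-MDP needed for ε-optimality is at most approximately 4⌈log₂|A|⌉^6 / (ε² (1-γ)^6); exactly, |S| ≤ 4(1 − γ + d)^6 / (γ² ε² (1-γ)^6). -/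
/-- Binary ESA bound. With `|A| = 2^d` actions, `λ = γ^(1/d)`,
`ε' = γε`, the ESA state bound for the binarized problem, `(2/(γε(1-λ)³))²`,
is at most `4(1 − γ + d)⁶/(γ²ε²(1-γ)⁶) = 4(1 − γ + log₂|A|)⁶/(γ²ε²(1-γ)⁶)`. -/
theorem binary_esa_bound (γ ε : ℝ) (d Acard : ℕ) (hγ0 : 0 < γ) (hγ1 : γ < 1)
    (hε : 0 < ε) (hd : 1 ≤ d) (hA : Acard = 2 ^ d) :
    (2 / (γ * ε * (1 - γ ^ ((1 : ℝ) / d)) ^ 3)) ^ 2 ≤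
        4 * (1 - γ + d) ^ 6 / (γ ^ 2 * ε ^ 2 * (1 - γ) ^ 6) ∧
      4 * (1 - γ + d) ^ 6 / (γ ^ 2 * ε ^ 2 * (1 - γ) ^ 6) =
        4 * (1 - γ + (Nat.log 2 Acard : ℝ)) ^ 6 / (γ ^ 2 * ε ^ 2 * (1 - γ) ^ 6) := by
  have hd0 : (0:ℝ) < d := by exact_mod_cast Nat.lt_of_lt_of_le Nat.zero_lt_one hd
  set l : ℝ := γ ^ ((1 : ℝ) / d) with hl
  have hl0 : 0 < l := Real.rpow_pos_of_pos hγ0 _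
  have hl1 : l < 1 := by
    apply Real.rpow_lt_one hγ0.le hγ1
    positivity
  have hpow : l ^ d = γ := by
    rw [hl, ← Real.rpow_natCast (γ ^ ((1:ℝ)/d)) d, ← Real.rpow_mul hγ0.le]
    rw [one_div, inv_mul_cancel₀ hd0.ne', Real.rpow_one]
  -- Bernoulli: 1 - γ ≤ d * (1 - l)
  have hbern : 1 - γ ≤ d * (1 - l) := by
    have := one_add_mul_le_pow (a := l - 1) (by linarith) d
    rw [show (1 : ℝ) + (l - 1) = l by ring, hpow] at this
    nlinarith
  have hkey : (1 - γ) / (1 - γ + d) ≤ 1 - l := by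
    rw [div_le_iff₀ (by linarith)]
    nlinarith [mul_pos (sub_pos.mpr hγ1) (sub_pos.mpr hl1)]
  have h1l : 0 < 1 - l := by linarith
  have h1γ : 0 < 1 - γ := by linarith
  constructor
  · have hRHS : 4 * (1 - γ + d) ^ 6 / (γ ^ 2 * ε ^ 2 * (1 - γ) ^ 6)
        = (2 / (γ * ε * ((1 - γ) / (1 - γ + d)) ^ 3)) ^ 2 := by
      rw [div_pow, div_pow]
      field_simp
      ring
    rw [hRHS]
    gcongr
  · rw [hA, Nat.log_pow (by norm_num)]
end
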